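/- arXiv:2604.01455 — 2 statements merged into one kernel-verified Lean document; each statement's English description precedes it below -/
import Mathlib

section
/- Suppose a problem graph P admits a minor-embedding into a hardware graph H with maximum degree Δ_H ≥ 3, and define s_i^min := max(1, ⌈(deg_P(i) - 2)/(Δ_H - 2)⌉). Then |E(P)| + Σ_{i ∈ V(P)} (s_i^min - 1) ≤ |E(H)|. -/
open scoped Classical

/-- A minor-embedding of a problem graph `P` into a hardware graph `H`. -/
def IsMinorEmbedding {α β : Type*} (P : SimpleGraph α) (H : SimpleGraph β)
    (φ : α → Finset β) : Prop :=
  (∀ i, (φ i).Nonempty) ∧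
  (∀ i, (H.induce (↑(φ i) : Set β)).Connected) ∧
  (∀ i k, i ≠ k → Disjoint (φ i) (φ k)) ∧
  (∀ i k, P.Adj i k → ∃ u ∈ φ i, ∃ v ∈ φ k, H.Adj u v)

/-- The minimum chain size `s_i^min = max(1, ⌈(d - 2)/(Δ - 2)⌉)` (natural-number ceiling
division of `a` by `b > 0` is `(a + b - 1) / b`). -/
def sMin (d Δ : ℕ) : ℕ := max 1 ((d - 2 + (Δ - 2) - 1) / (Δ - 2))

/-- Any connected graph on a finite vertex type has at least `card V - 1` edges. -/
lemma conn_card_le {V : Type*} [Fintype V] :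
    ∀ (n : ℕ) (G : SimpleGraph V) [Fintype G.edgeSet], G.edgeFinset.card = n → G.Connected →
      Fintype.card V ≤ n + 1 := by
  intro n
  induction n using Nat.strong_induction_on with
  | _ n ih =>
    intro G _ hn hc
    by_cases hac : G.IsAcyclic
    · have := SimpleGraph.IsTree.card_edgeFinset ⟨hc, hac⟩
      omega
    · rw [SimpleGraph.isAcyclic_iff_forall_adj_isBridge] at hac
      push_neg at hac
      obtain ⟨v, w, hvw, hbr⟩ := hac
      have hreach : (G \ SimpleGraph.fromEdgeSet {s(v, w)}).Reachable v w := by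
        by_contra hre
        exact hbr hre
      set G' := G \ SimpleGraph.fromEdgeSet {s(v, w)} with hG'
      haveI : Fintype G'.edgeSet := Fintype.ofFinite _
      have hstep : ∀ a b, G.Adj a b → G'.Reachable a b := by
        intro a b hab
        by_cases he : s(a, b) = s(v, w)
        · rw [Sym2.eq_iff] at he
          rcases he with ⟨rfl, rfl⟩ | ⟨rfl, rfl⟩
          · exact hreach
          · exact hreach.symm
        · refine SimpleGraph.Adj.reachable ?_
          rw [hG', SimpleGraph.sdiff_adj]
          refine ⟨hab, ?_⟩
          rw [SimpleGraph.fromEdgeSet_adj]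
          simp only [Set.mem_singleton_iff]
          tauto
      haveI : Nonempty V := hc.nonempty
      have hc' : G'.Connected := by
        refine SimpleGraph.Connected.mk ?_
        intro x y
        obtain ⟨p⟩ := hc.preconnected x y
        induction p with
        | nil => exact SimpleGraph.Reachable.refl _
        | cons h p ih' => exact (hstep _ _ h).trans ih'
      have hmem : s(v, w) ∈ G.edgeFinset := by
        rw [SimpleGraph.mem_edgeFinset, SimpleGraph.mem_edgeSet]; exact hvw
      have hE : G'.edgeFinset = G.edgeFinset.erase s(v, w) := by
        ext e
        simp only [SimpleGraph.mem_edgeFinset, Finset.mem_erase, hG',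
          SimpleGraph.edgeSet_sdiff, SimpleGraph.edgeSet_fromEdgeSet, Set.mem_diff,
          Set.mem_singleton_iff, Set.mem_setOf_eq]
        constructor
        · rintro ⟨h1, h2⟩
          refine ⟨?_, h1⟩
          rintro rfl
          exact h2 ⟨rfl, by rw [Sym2.mem_diagSet, Sym2.mk_isDiag_iff]; exact hvw.ne⟩
        · rintro ⟨hne, h1⟩
          exact ⟨h1, fun h => hne h.1⟩
      have hcard' : G'.edgeFinset.card = n - 1 := by
        rw [hE, Finset.card_erase_of_mem hmem, hn]
      have hpos : 0 < n := hn ▸ Finset.card_pos.mpr ⟨_, hmem⟩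
      have := ih (n - 1) (by omega) G' hcard' hc'
      omega

lemma ceil_div_le_of_le_mul {a b s : ℕ} (hb : 1 ≤ b) (h : a ≤ s * b) :
    (a + b - 1) / b ≤ s := by
  rw [Nat.div_le_iff_le_mul_add_pred hb]
  have : b * s = s * b := Nat.mul_comm _ _
  omega

/-- If `P` admits a minor-embedding into `H` with maximum degree `Δ_H ≥ 3`,
then `|E(P)| + Σ_{i ∈ V(P)} (s_i^min - 1) ≤ |E(H)|`. -/
theorem edge_sMin_bound_of_minorEmbedding {α β : Type*} [Fintype α] [Fintype β]
    [DecidableEq α] [DecidableEq β]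
    (P : SimpleGraph α) (H : SimpleGraph β) [DecidableRel P.Adj] [DecidableRel H.Adj]
    (ΔH : ℕ) (hΔ : H.maxDegree = ΔH) (hΔ3 : 3 ≤ ΔH)
    (h : ∃ φ : α → Finset β, IsMinorEmbedding P H φ) :
    P.edgeFinset.card + ∑ i, (sMin (P.degree i) ΔH - 1) ≤ H.edgeFinset.card := by
  obtain ⟨φ, hne, hconn, hdisj, hedge⟩ := h
  -- a helper: a vertex lies in at most one chain
  have huniq : ∀ (x : β) (i j : α), x ∈ φ i → x ∈ φ j → i = j := by
    intro x i j h1 h2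
    by_contra hij
    exact Finset.disjoint_left.mp (hdisj i j hij) h1 h2
  rcases isEmpty_or_nonempty β with hβ | hβ
  · haveI : IsEmpty α := ⟨fun i => by
      obtain ⟨b, _⟩ := hne i
      exact hβ.false b⟩
    have h1 : P.edgeFinset = ∅ := by
      ext e
      induction e using Sym2.ind with
      | _ i k => exact (IsEmpty.false i).elim
    simp [h1]
  -- chain sizes vs induced edge counts
  have hEi : ∀ i, (φ i).card ≤ (H.induce (↑(φ i) : Set β)).edgeFinset.card + 1 := by
    intro i
    have := conn_card_le _ (H.induce (↑(φ i) : Set β)) rfl (hconn i)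
    simpa using this
  -- the intra-chain edge sets
  set T : α → Finset (Sym2 β) :=
    fun i => H.edgeFinset.filter (fun e => ∀ v ∈ e, v ∈ φ i) with hT
  have hTcard : ∀ i, (φ i).card ≤ (T i).card + 1 := by
    intro i
    refine (hEi i).trans (Nat.add_le_add_right ?_ 1)
    apply Finset.card_le_card_of_injOn (Sym2.map Subtype.val)
    · intro e he
      induction e using Sym2.ind with
      | _ u v =>
        rw [Finset.mem_coe, SimpleGraph.mem_edgeFinset, SimpleGraph.mem_edgeSet, SimpleGraph.comap_adj] at he
        rw [Finset.mem_coe, Sym2.map_pair_eq, hT, Finset.mem_filter]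
        constructor
        · rw [SimpleGraph.mem_edgeFinset, SimpleGraph.mem_edgeSet]
          exact he
        · intro x hx
          rw [Sym2.mem_iff] at hx
          rcases hx with rfl | rfl
          · exact u.2
          · exact v.2
    · exact (Sym2.map.injective Subtype.val_injective).injOn
  -- chain degree bound
  have chain_deg : ∀ i, P.degree i + 2 * ((φ i).card - 1) ≤ (φ i).card * ΔH := by
    intro i
    set S := φ i with hS
    set A := (S ×ˢ (Finset.univ : Finset β)).filter (fun p => H.Adj p.1 p.2) with hA
    have hDC : (A.filter (fun p => p.2 ∈ S)).card + (A.filter (fun p => ¬ p.2 ∈ S)).card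
        = A.card := Finset.card_filter_add_card_filter_not _
    have hAcard : A.card ≤ S.card * ΔH := by
      rw [Finset.card_eq_sum_card_fiberwise (f := Prod.fst) (t := S)
        (fun p hp => by simp only [Finset.mem_coe, hA, Finset.mem_filter, Finset.mem_product] at hp
                        exact hp.1.1)]
      refine le_trans (Finset.sum_le_sum (g := fun _ => ΔH) ?_)
        (by rw [Finset.sum_const, smul_eq_mul])
      intro u hu
      have h1 : (A.filter fun p => p.1 = u).card ≤ (H.neighborFinset u).card := by
        apply Finset.card_le_card_of_injOn (fun p => p.2)
        · intro p hp
          simp only [Finset.mem_coe, Finset.mem_filter] at hp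
          obtain ⟨hpA, hpu⟩ := hp
          rw [hA, Finset.mem_filter] at hpA
          rw [Finset.mem_coe, SimpleGraph.mem_neighborFinset, ← hpu]
          exact hpA.2
        · intro p hp q hq hpq
          simp only [Finset.mem_coe, Finset.mem_filter] at hp hq
          exact Prod.ext (hp.2.trans hq.2.symm) hpq
      refine h1.trans ?_
      rw [SimpleGraph.card_neighborFinset_eq_degree]
      exact hΔ ▸ H.degree_le_maxDegree u
    have hDcard : 2 * (S.card - 1) ≤ (A.filter (fun p => p.2 ∈ S)).card := by
      have e1 : S.card ≤ (H.induce (↑S : Set β)).edgeFinset.card + 1 := hEi i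
      have e2 : Fintype.card (H.induce (↑S : Set β)).Dart
          = 2 * (H.induce (↑S : Set β)).edgeFinset.card :=
        SimpleGraph.dart_card_eq_twice_card_edges _
      have e3 : Fintype.card (H.induce (↑S : Set β)).Dart
          ≤ (A.filter (fun p => p.2 ∈ S)).card := by
        rw [← Finset.card_univ]
        apply Finset.card_le_card_of_injOn
          (fun d => ((d.toProd.1 : β), (d.toProd.2 : β)))
        · intro d _
          have hadj := d.adj
          rw [SimpleGraph.comap_adj] at hadj
          simp only [Finset.mem_coe, hA, Finset.mem_filter, Finset.mem_product]
          refine ⟨⟨⟨?_, Finset.mem_univ _⟩, hadj⟩, ?_⟩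
          · exact d.toProd.1.2
          · exact d.toProd.2.2
        · intro d _ d' _ hdd'
          have h1 : d.toProd = d'.toProd := by
            have hx := congrArg Prod.fst hdd'
            have hy := congrArg Prod.snd hdd'
            exact Prod.ext (Subtype.val_injective hx) (Subtype.val_injective hy)
          exact SimpleGraph.Dart.ext _ _ h1
      omega
    have hCcard : P.degree i ≤ (A.filter (fun p => ¬ p.2 ∈ S)).card := by
      rw [← SimpleGraph.card_neighborFinset_eq_degree]
      have hnb : ∀ k ∈ P.neighborFinset i, ∃ p : β × β,
          p ∈ A.filter (fun p => ¬ p.2 ∈ S) ∧ p.2 ∈ φ k := by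
        intro k hk
        rw [SimpleGraph.mem_neighborFinset] at hk
        obtain ⟨u, hu, v, hv, huv⟩ := hedge i k hk
        have hik : i ≠ k := hk.ne
        have hvS : ¬ v ∈ S := fun hvS => hik (huniq v i k hvS hv)
        refine ⟨(u, v), ?_, hv⟩
        simp only [hA, Finset.mem_filter, Finset.mem_product]
        exact ⟨⟨⟨hu, Finset.mem_univ _⟩, huv⟩, hvS⟩
      choose! f hf1 hf2 using hnb
      apply Finset.card_le_card_of_injOn f hf1
      intro k hk k' hk' hkk'
      exact huniq (f k).2 k k' (hf2 k hk) (by rw [hkk']; exact hf2 k' hk')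
    omega
  -- minimum chain size bound
  have hsmin : ∀ i, sMin (P.degree i) ΔH ≤ (φ i).card := by
    intro i
    have h1 : 1 ≤ (φ i).card := Finset.card_pos.mpr (hne i)
    have h2 := chain_deg i
    rw [sMin, max_le_iff]
    refine ⟨h1, ?_⟩
    apply ceil_div_le_of_le_mul (by omega)
    have h3 : (φ i).card * ΔH = (φ i).card * (ΔH - 2) + (φ i).card * 2 := by
      rw [← Nat.mul_add]
      congr 1
      omega
    omega
  -- the chains' edge sets are pairwise disjoint
  have hTdisj : ∀ i j, i ≠ j → Disjoint (T i) (T j) := by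
    intro i j hij
    rw [Finset.disjoint_left]
    intro e hei hej
    induction e using Sym2.ind with
    | _ a b =>
      simp only [hT, Finset.mem_filter] at hei hej
      exact hij (huniq a i j (hei.2 a (Sym2.mem_mk_left a b)) (hej.2 a (Sym2.mem_mk_left a b)))
  -- choose a witness hardware edge for each problem edge
  have key : ∀ e ∈ P.edgeFinset, ∃ c : Sym2 β, c ∈ H.edgeFinset ∧ (∀ j, c ∉ T j) ∧
      ∀ i k, e = s(i, k) → ∃ u v, u ∈ φ i ∧ v ∈ φ k ∧ c = s(u, v) := by
    intro e he
    induction e using Sym2.ind with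
    | _ i k =>
      rw [SimpleGraph.mem_edgeFinset, SimpleGraph.mem_edgeSet] at he
      obtain ⟨u, hu, v, hv, huv⟩ := hedge i k he
      refine ⟨s(u, v), ?_, ?_, ?_⟩
      · rw [SimpleGraph.mem_edgeFinset, SimpleGraph.mem_edgeSet]; exact huv
      · intro j hj
        simp only [hT, Finset.mem_filter] at hj
        have h1 : u ∈ φ j := hj.2 u (Sym2.mem_mk_left u v)
        have h2 : v ∈ φ j := hj.2 v (Sym2.mem_mk_right u v)
        exact he.ne ((huniq u i j hu h1).trans (huniq v j k h2 hv))
      · intro i' k' hik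
        rcases Sym2.eq_iff.mp hik with ⟨rfl, rfl⟩ | ⟨rfl, rfl⟩
        · exact ⟨u, v, hu, hv, rfl⟩
        · exact ⟨v, u, hv, hu, Sym2.eq_swap.symm⟩
  haveI : Nonempty (Sym2 β) := ⟨s(Classical.arbitrary β, Classical.arbitrary β)⟩
  choose! g hg1 hg2 hg3 using key
  set F := P.edgeFinset.image g with hF
  have hFcard : F.card = P.edgeFinset.card := by
    apply Finset.card_image_of_injOn
    intro e he e' he' hgg
    induction e using Sym2.ind with
    | _ i k =>
      induction e' using Sym2.ind with
      | _ i' k' =>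
        obtain ⟨u, v, hu, hv, hc⟩ := hg3 _ he i k rfl
        obtain ⟨u', v', hu', hv', hc'⟩ := hg3 _ he' i' k' rfl
        have huvv : s(u, v) = s(u', v') := by rw [← hc, ← hc', hgg]
        rcases Sym2.eq_iff.mp huvv with ⟨h1, h2⟩ | ⟨h1, h2⟩
        · exact Sym2.eq_iff.mpr (Or.inl ⟨huniq u i i' hu (h1 ▸ hu'), huniq v k k' hv (h2 ▸ hv')⟩)
        · exact Sym2.eq_iff.mpr (Or.inr ⟨huniq u i k' hu (h1 ▸ hv'), huniq v k i' hv (h2 ▸ hu')⟩)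
  set U := Finset.univ.biUnion T with hU
  have hUcard : U.card = ∑ i, (T i).card :=
    Finset.card_biUnion (fun i _ j _ hij => hTdisj i j hij)
  have hFUdisj : Disjoint F U := by
    rw [Finset.disjoint_left]
    intro c hcF hcU
    rw [hF, Finset.mem_image] at hcF
    obtain ⟨e, he, rfl⟩ := hcF
    rw [hU, Finset.mem_biUnion] at hcU
    obtain ⟨j, _, hj⟩ := hcU
    exact hg2 e he j hj
  have hsub : F ∪ U ⊆ H.edgeFinset := by
    apply Finset.union_subset
    · intro c hc
      rw [hF, Finset.mem_image] at hc
      obtain ⟨e, he, rfl⟩ := hc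
      exact hg1 e he
    · intro c hc
      rw [hU, Finset.mem_biUnion] at hc
      obtain ⟨j, _, hj⟩ := hc
      exact (Finset.mem_filter.mp hj).1
  calc P.edgeFinset.card + ∑ i, (sMin (P.degree i) ΔH - 1)
      ≤ F.card + ∑ i, (T i).card := by
        rw [hFcard]
        refine Nat.add_le_add_left (Finset.sum_le_sum ?_) _
        intro i _
        have := hsmin i
        have := hTcard i
        omega
    _ = F.card + U.card := by rw [hUcard]
    _ = (F ∪ U).card := (Finset.card_union_of_disjoint hFUdisj).symm
    _ ≤ H.edgeFinset.card := Finset.card_le_card hsub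
end

section
/- Let P be a finite simple graph with maximum degree Δ_P, and suppose there exists i ∈ V(P) with deg_P(i) > L(Δ_H - 2) + 2, where Δ_H ≥ 3. Then P admits no minor-embedding into any graph H of maximum degree at most Δ_H with all chains of size at most L. -/
open scoped Classical

lemma reachable_of_le_nonbridge {V : Type*} {G : SimpleGraph V} {G' : SimpleGraph V}
    (hle : G' ≤ G) (key : ∀ {x y : V}, G.Adj x y → G'.Reachable x y) :
    ∀ {a b : V}, G.Reachable a b → G'.Reachable a b := by
  intro a b ⟨p⟩
  induction p with
  | nil => exact SimpleGraph.Reachable.refl _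
  | cons h _ ih => exact (key h).trans ih

lemma conn_card_le_edges : ∀ (n : ℕ) {V : Type*} [Fintype V] (G : SimpleGraph V)
    [Fintype G.edgeSet], G.edgeFinset.card = n → G.Connected →
    Fintype.card V ≤ n + 1 := by
  intro n
  induction n using Nat.strong_induction_on with
  | _ n ih =>
    intro V _ G _ hn hc
    by_cases hac : G.IsAcyclic
    · have := SimpleGraph.IsTree.card_edgeFinset ⟨hc, hac⟩
      omega
    · rw [SimpleGraph.isAcyclic_iff_forall_edge_isBridge] at hac
      push_neg at hac
      obtain ⟨e, he, hnb⟩ := hac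
      induction e using Sym2.ind with
      | _ v w =>
      rw [SimpleGraph.isBridge_iff] at hnb
      rw [SimpleGraph.mem_edgeSet] at he
      have hreach : (G \ SimpleGraph.fromEdgeSet {s(v, w)}).Reachable v w := by
        by_contra hcon
        exact hnb hcon
      set G' := G \ SimpleGraph.fromEdgeSet {s(v, w)} with hG'
      have hle : G' ≤ G := sdiff_le
      have key : ∀ {x y : V}, G.Adj x y → G'.Reachable x y := by
        intro x y hxy
        by_cases hxe : s(x, y) = s(v, w)
        · rcases Sym2.eq_iff.mp hxe with ⟨rfl, rfl⟩ | ⟨rfl, rfl⟩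
          · exact hreach
          · exact hreach.symm
        · exact SimpleGraph.Adj.reachable (by
            simp [hG', SimpleGraph.sdiff_adj, hxy, hxe])
      have hc' : G'.Connected := by
        have : Nonempty V := hc.nonempty
        exact SimpleGraph.Connected.mk
          (fun a b => reachable_of_le_nonbridge hle key (hc.preconnected a b))
      have hsub : G'.edgeFinset ⊂ G.edgeFinset := by
        refine Finset.ssubset_iff_of_subset (by
          intro x hx
          rw [SimpleGraph.mem_edgeFinset] at *
          exact SimpleGraph.edgeSet_mono hle hx) |>.mpr ?_
        refine ⟨s(v, w), ?_, ?_⟩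
        · rwa [SimpleGraph.mem_edgeFinset]
        · rw [SimpleGraph.mem_edgeFinset, hG']
          simp [SimpleGraph.edgeSet_sdiff, SimpleGraph.edgeSet_fromEdgeSet]
      have hlt : G'.edgeFinset.card < n := hn ▸ Finset.card_lt_card hsub
      have := ih _ hlt G' rfl hc'
      omega


/-- (Zero-phase degree condition, contrapositive form.) If some vertex `i`
of `P` has `deg_P(i) > L * (Δ_H - 2) + 2` with `Δ_H ≥ 3`, then `P` admits no minor-embedding
with all chains of size at most `L` into any graph `H` of maximum degree at most `Δ_H`. -/
theorem no_minorEmbedding_of_degree_violation {α : Type*} [Fintype α] [DecidableEq α]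
    (P : SimpleGraph α) [DecidableRel P.Adj]
    (ΔH L : ℕ) (hΔ3 : 3 ≤ ΔH)
    (i : α) (hdeg : L * (ΔH - 2) + 2 < P.degree i) :
    ∀ {β : Type*} [Fintype β] [DecidableEq β] (H : SimpleGraph β)
      [DecidableRel H.Adj], H.maxDegree ≤ ΔH →
      ¬ ∃ φ : α → Finset β, IsMinorEmbedding P H φ ∧ ∀ j, (φ j).card ≤ L := by
  intro β _ _ H _ hmax ⟨φ, ⟨hne, hconn, hdisj, hedge⟩, hL⟩
  set S : Finset β := φ i with hS
  have hm1 : 1 ≤ S.card := Finset.card_pos.mpr (hne i)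
  set GS := H.induce (↑S : Set β) with hGS
  have hcard : Fintype.card ↥(↑S : Set β) = S.card := by
    simp
  -- internal edge count bound from connectivity
  have h1 : S.card ≤ GS.edgeFinset.card + 1 := by
    rw [← hcard]
    exact conn_card_le_edges _ GS rfl (hconn i)
  have hsum : ∑ u : ↥(↑S : Set β), GS.degree u = 2 * GS.edgeFinset.card :=
    SimpleGraph.sum_degrees_eq_twice_card_edges GS
  have hdegS : ∀ u : ↥(↑S : Set β), GS.degree u = (S.filter (fun b => H.Adj ↑u b)).card := by
    intro u
    rw [← SimpleGraph.card_neighborFinset_eq_degree]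
    have himg : (GS.neighborFinset u).image (Subtype.val) = S.filter (fun b => H.Adj ↑u b) := by
      ext b
      simp only [Finset.mem_image, SimpleGraph.mem_neighborFinset, Finset.mem_filter]
      constructor
      · rintro ⟨⟨b', hb'⟩, hadj, rfl⟩
        exact ⟨by simpa using hb', hadj⟩
      · rintro ⟨hbS, hadj⟩
        exact ⟨⟨b, by simpa using hbS⟩, hadj, rfl⟩
    rw [← himg, Finset.card_image_of_injective _ Subtype.val_injective]
  -- sum of internal degrees
  have hsum2 : ∑ u ∈ S, (S.filter (fun b => H.Adj u b)).card
      = 2 * GS.edgeFinset.card := by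
    rw [← hsum, ← Finset.sum_coe_sort S (fun u => (S.filter (fun b => H.Adj u b)).card)]
    refine Fintype.sum_equiv (Equiv.subtypeEquivRight (by simp)) _ _ ?_
    intro u
    rw [hdegS]
    rfl
  -- external edge pairs
  set T : Finset (β × β) := (S ×ˢ Sᶜ).filter (fun p => H.Adj p.1 p.2) with hT
  have hβ : Nonempty β := ⟨(hne i).choose⟩
  have hcount : P.degree i ≤ T.card := by
    rw [← SimpleGraph.card_neighborFinset_eq_degree]
    refine Finset.card_le_card_of_injOn
      (fun k => if h : P.Adj i k then
          ((hedge i k h).choose, (hedge i k h).choose_spec.2.choose)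
        else (Classical.arbitrary _)) ?_ ?_
    · intro k hk
      rw [Finset.mem_coe, SimpleGraph.mem_neighborFinset] at hk
      simp only [dif_pos hk]
      obtain ⟨hu, v, hv, hadj⟩ := (hedge i k hk).choose_spec
      have hik : i ≠ k := P.ne_of_adj hk
      have hvS : (hedge i k hk).choose_spec.2.choose ∉ S := by
        intro hcon
        exact Finset.disjoint_left.mp (hdisj i k hik) hcon
          (hedge i k hk).choose_spec.2.choose_spec.1
      rw [hT, Finset.mem_coe, Finset.mem_filter, Finset.mem_product, Finset.mem_compl]
      exact ⟨⟨hu, hvS⟩, (hedge i k hk).choose_spec.2.choose_spec.2⟩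
    · intro k hk k' hk' heq
      simp only [Finset.mem_coe, SimpleGraph.mem_neighborFinset] at hk hk'
      simp only [dif_pos hk, dif_pos hk', Prod.mk.injEq] at heq
      by_contra hkk
      have h1 := (hedge i k hk).choose_spec.2.choose_spec.1
      have h2 := (hedge i k' hk').choose_spec.2.choose_spec.1
      rw [heq.2] at h1
      exact Finset.disjoint_left.mp (hdisj k k' hkk) h1 h2
  have hTsum : T.card = ∑ u ∈ S, (Sᶜ.filter (fun b => H.Adj u b)).card := by
    rw [Finset.card_eq_sum_card_fiberwise (f := Prod.fst) (t := S)
      (fun p hp => (Finset.mem_product.mp (Finset.mem_filter.mp hp).1).1)]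
    refine Finset.sum_congr rfl fun u hu => ?_
    have himg : T.filter (fun p => p.1 = u)
        = (Sᶜ.filter (fun b => H.Adj u b)).image (fun b => (u, b)) := by
      ext ⟨a, b⟩
      simp only [hT, Finset.mem_filter, Finset.mem_product, Finset.mem_image,
        Finset.mem_compl, Prod.mk.injEq]
      constructor
      · rintro ⟨⟨⟨ha, hb⟩, hadj⟩, rfl⟩
        exact ⟨b, ⟨hb, hadj⟩, rfl, rfl⟩
      · rintro ⟨c, ⟨hc, hadj⟩, rfl, rfl⟩
        exact ⟨⟨⟨hu, hc⟩, hadj⟩, rfl⟩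
    rw [himg, Finset.card_image_of_injective _ (fun x y hxy => (Prod.mk.injEq _ _ _ _).mp hxy |>.2)]
  have hsplit : ∀ u : β, (S.filter (fun b => H.Adj u b)).card
      + (Sᶜ.filter (fun b => H.Adj u b)).card = H.degree u := by
    intro u
    rw [← SimpleGraph.card_neighborFinset_eq_degree]
    have e1 : S.filter (fun b => H.Adj u b) = H.neighborFinset u ∩ S := by
      ext b; simp [SimpleGraph.mem_neighborFinset, and_comm]
    have e2 : Sᶜ.filter (fun b => H.Adj u b) = H.neighborFinset u \ S := by
      ext b; simp [SimpleGraph.mem_neighborFinset, and_comm]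
    rw [e1, e2, Finset.card_inter_add_card_sdiff]
  have hA : (∑ u ∈ S, (S.filter (fun b => H.Adj u b)).card)
      + (∑ u ∈ S, (Sᶜ.filter (fun b => H.Adj u b)).card) = ∑ u ∈ S, H.degree u := by
    rw [← Finset.sum_add_distrib]
    exact Finset.sum_congr rfl fun u _ => hsplit u
  have hdegsum : ∑ u ∈ S, H.degree u ≤ S.card * ΔH := by
    have := Finset.sum_le_card_nsmul S (fun u => H.degree u) ΔH
      (fun u _ => (H.degree_le_maxDegree u).trans hmax)
    simpa [smul_eq_mul] using this
  have hm : S.card ≤ L := hL i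
  have h3 : S.card * ΔH = S.card * (ΔH - 2) + S.card * 2 := by
    rw [← Nat.mul_add, Nat.sub_add_cancel (by omega)]
  have h2 : S.card * (ΔH - 2) ≤ L * (ΔH - 2) := Nat.mul_le_mul_right _ hm
  omega
end
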